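/- IGD satisfies a triangle-type bound: for nonempty finite sets A, B, Γ in a metric space, IGD(A,Γ) ≤ IGD(B,Γ) + max_{b∈B} min_{a∈A} dist(b,a). -/

import Mathlib

namespace Finset

theorem inf'_dist_le_inf'_dist_add_sup' {α : Type*} [PseudoMetricSpace α] (x : α)
    {A B : Finset α} (hA : A.Nonempty) (hB : B.Nonempty) :
    A.inf' hA (dist x ·) ≤ B.inf' hB (dist x ·) + B.sup' hB fun b => A.inf' hA (dist b ·) := by
  obtain ⟨b, hb, hb_min⟩ := B.exists_mem_eq_inf' hB (dist x ·)
  obtain ⟨a, ha, ha_min⟩ := A.exists_mem_eq_inf' hA (dist b ·)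
  calc A.inf' hA (dist x ·) ≤ dist x a := inf'_le _ ha
    _ ≤ dist x b + dist b a := dist_triangle x b a
    _ ≤ B.inf' hB (dist x ·) + B.sup' hB fun b => A.inf' hA (dist b ·) := by
      rw [hb_min, ← ha_min]
      exact add_le_add_right (le_sup' (fun b => A.inf' hA (dist b ·)) hb) _

theorem sup'_inf'_dist_nonneg {α : Type*} [PseudoMetricSpace α]
    {A B : Finset α} (hA : A.Nonempty) (hB : B.Nonempty) :
    0 ≤ B.sup' hB fun b => A.inf' hA (dist b ·) :=
  le_sup'_of_le _ hB.choose_spec (le_inf' _ _ fun _ _ => dist_nonneg)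

theorem one_div_card_mul_sum_le_add {ι : Type*} (s : Finset ι) {f g : ι → ℝ} {c : ℝ}
    (hc : 0 ≤ c) (h : ∀ i ∈ s, f i ≤ g i + c) :
    1 / s.card * ∑ i ∈ s, f i ≤ 1 / s.card * ∑ i ∈ s, g i + c := by
  rcases s.eq_empty_or_nonempty with rfl | hs
  · simpa using hc
  have hcard : (0 : ℝ) < s.card := by exact_mod_cast hs.card_pos
  have hsum : ∑ i ∈ s, f i ≤ ∑ i ∈ s, g i + s.card * c := by
    simpa [sum_add_distrib] using sum_le_sum h
  calc 1 / s.card * ∑ i ∈ s, f i ≤ 1 / s.card * (∑ i ∈ s, g i + s.card * c) := by gcongr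
    _ = 1 / s.card * ∑ i ∈ s, g i + c := by field_simp

end Finset

theorem igd_triangle_general {α : Type*} [MetricSpace α]
    (Γ A B : Finset α) (hA : A.Nonempty) (hB : B.Nonempty) :
    ((1 : ℝ) / Γ.card) * ∑ γ ∈ Γ, (A.inf' hA fun a => dist γ a) ≤
      ((1 : ℝ) / Γ.card) * ∑ γ ∈ Γ, (B.inf' hB fun b => dist γ b) +
        B.sup' hB (fun b => A.inf' hA fun a => dist b a) :=
  Γ.one_div_card_mul_sum_le_add (Finset.sup'_inf'_dist_nonneg hA hB)
    fun γ _ => Finset.inf'_dist_le_inf'_dist_add_sup' γ hA hB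

theorem igd_triangle {α : Type*} [MetricSpace α]
    (Γ A B : Finset α) (hΓ : Γ.Nonempty) (hA : A.Nonempty) (hB : B.Nonempty) :
    ((1 : ℝ) / Γ.card) * ∑ γ ∈ Γ, (A.inf' hA fun a => dist γ a) ≤
      ((1 : ℝ) / Γ.card) * ∑ γ ∈ Γ, (B.inf' hB fun b => dist γ b) +
        B.sup' hB (fun b => A.inf' hA fun a => dist b a) :=
  igd_triangle_general Γ A B hA hB
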